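/- arXiv:0807.2592 — 5 statements merged into one kernel-verified Lean document; each statement's English description precedes it below -/
import Mathlib

section
/- Let T be a triangulated category, X an object of T, and n a natural number. If X/n is any cone of n·id_X, i.e., an object fitting in a distinguished triangle X --n·--> X --> X/n --> X[1], then the endomorphism group [X/n, X/n] is annihilated by n², i.e., n²·id_{X/n} = 0. -/
/-!
In a distinguished triangle `X ⟶ Y ⟶ Z ⟶ X⟦1⟧`, if `m` kills `Z ⟶ X⟦1⟧` then `m • 𝟙 Z` lifts
through `Y ⟶ Z`, so if moreover `k` kills `Y ⟶ Z`, then `(m * k) • 𝟙 Z = 0`. For a cone of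
`n • 𝟙 X` both maps out of `X` and into `X⟦1⟧` are killed by `n`, since consecutive morphisms of a
distinguished triangle compose to zero.
-/

open CategoryTheory Category Limits Pretriangulated

namespace CategoryTheory.Pretriangulated

variable {C : Type*} [Category C] [Preadditive C] [HasZeroObject C] [HasShift C ℤ]
  [∀ n : ℤ, (shiftFunctor C n).Additive] [Pretriangulated C]

lemma mul_zsmul_id_obj₃_eq_zero_of_distTriang (T : Triangle C) (hT : T ∈ distTriang C) {m k : ℤ}
    (hm : m • T.mor₃ = 0) (hk : k • T.mor₂ = 0) : (m * k) • 𝟙 T.obj₃ = 0 := by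
  obtain ⟨g, hg⟩ : ∃ g : T.obj₃ ⟶ T.obj₂, m • 𝟙 T.obj₃ = g ≫ T.mor₂ :=
    Triangle.coyoneda_exact₃ T hT _ (by rwa [Preadditive.zsmul_comp, id_comp])
  calc (m * k) • 𝟙 T.obj₃ = (m • 𝟙 T.obj₃) ≫ (k • 𝟙 T.obj₃) := by
        rw [Preadditive.zsmul_comp, Preadditive.comp_zsmul, id_comp, mul_smul]
    _ = g ≫ (k • T.mor₂) := by rw [hg, assoc, Preadditive.comp_zsmul, comp_id]
    _ = 0 := by rw [hk, comp_zero]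

lemma zsmul_mor₂_eq_zero_of_mor₁_eq_zsmul_id {X Z : C} {n : ℤ} {π : X ⟶ Z} {δ : Z ⟶ X⟦(1 : ℤ)⟧}
    (h : Triangle.mk (n • 𝟙 X) π δ ∈ distTriang C) :
    n • π = 0 := by
  have : (n • 𝟙 X) ≫ π = 0 := comp_distTriang_mor_zero₁₂ _ h
  rwa [Preadditive.zsmul_comp, id_comp] at this

lemma zsmul_mor₃_eq_zero_of_mor₁_eq_zsmul_id {X Z : C} {n : ℤ} {π : X ⟶ Z} {δ : Z ⟶ X⟦(1 : ℤ)⟧}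
    (h : Triangle.mk (n • 𝟙 X) π δ ∈ distTriang C) :
    n • δ = 0 := by
  have : δ ≫ (n • 𝟙 X)⟦(1 : ℤ)⟧' = 0 := comp_distTriang_mor_zero₃₁ _ h
  rwa [Functor.map_zsmul, Functor.map_id, Preadditive.comp_zsmul, comp_id] at this

end CategoryTheory.Pretriangulated

/-- In a triangulated category, if `X/n` is any cone of `n • 𝟙 X`, then the
endomorphism group of `X/n` is annihilated by `n ^ 2`. -/
theorem stmt0 {C : Type*} [Category C] [Preadditive C] [HasZeroObject C]
    [HasShift C ℤ] [∀ n : ℤ, (shiftFunctor C n).Additive] [Pretriangulated C]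
    (X : C) (n : ℕ) (Xn : C) (π : X ⟶ Xn) (δ : Xn ⟶ X⟦(1 : ℤ)⟧)
    (h : Triangle.mk ((n : ℤ) • 𝟙 X) π δ ∈ distTriang C) :
    ((n : ℤ) ^ 2) • 𝟙 Xn = 0 := by
  rw [sq]
  exact mul_zsmul_id_obj₃_eq_zero_of_distTriang _ h
    (zsmul_mor₃_eq_zero_of_mor₁_eq_zsmul_id h)
    (zsmul_mor₂_eq_zero_of_mor₁_eq_zsmul_id h)
end

section
/- In any triangulated category, given a distinguished triangle A --f--> B --φ--> C --δ--> A[1], and morphisms j: C → M, σ: M → C such that σ∘j∘φ = φ and δ∘σ∘j = δ, the morphism σ' = 2σ − σ∘(j∘σ) satisfies σ'∘j = id_C. -/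
open CategoryTheory Category Limits Pretriangulated

/-- In a triangulated category, given a distinguished triangle
`A --f--> B --φ--> C --δ--> A⟦1⟧` and morphisms `j : C ⟶ M`, `σ : M ⟶ C`
with `φ ≫ j ≫ σ = φ` (i.e. `σ∘j∘φ = φ`) and `j ≫ σ ≫ δ = δ` (i.e. `δ∘σ∘j = δ`),
the morphism `σ' = 2σ − σ∘(j∘σ)` is a retraction of `j`: `j ≫ σ' = 𝟙 C`. -/
theorem stmt5 {T : Type*} [Category T] [Preadditive T] [HasZeroObject T]
    [HasShift T ℤ] [∀ n : ℤ, (shiftFunctor T n).Additive] [Pretriangulated T]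
    (A B C M : T) (f : A ⟶ B) (φ : B ⟶ C) (δ : C ⟶ A⟦(1 : ℤ)⟧)
    (hT : Triangle.mk f φ δ ∈ distTriang T)
    (j : C ⟶ M) (σ : M ⟶ C)
    (h1 : φ ≫ j ≫ σ = φ) (h2 : j ≫ σ ≫ δ = δ) :
    j ≫ ((2 : ℤ) • σ - σ ≫ j ≫ σ) = 𝟙 C := by
  obtain ⟨g, hg⟩ := Triangle.yoneda_exact₃ _ hT (j ≫ σ - 𝟙 C)
    (by change φ ≫ (j ≫ σ - 𝟙 C) = 0; rw [Preadditive.comp_sub, h1, comp_id, sub_self])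
  simp only [Triangle.mk_mor₃] at hg
  have hed : (j ≫ σ - 𝟙 C) ≫ δ = 0 := by
    simp only [Preadditive.sub_comp, id_comp, assoc, h2, sub_self]
  have he : (j ≫ σ - 𝟙 C) ≫ (j ≫ σ - 𝟙 C) = 0 := by
    nth_rewrite 2 [hg]
    exact (assoc _ _ _).symm.trans ((congrArg (· ≫ g) hed).trans (zero_comp))
  have expand : (j ≫ σ) ≫ (j ≫ σ) - j ≫ σ - j ≫ σ + 𝟙 C = 0 := by
    rw [← he]
    simp only [Preadditive.sub_comp, Preadditive.comp_sub, comp_id, id_comp]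
    abel
  have key : j ≫ σ ≫ j ≫ σ = (j ≫ σ) ≫ (j ≫ σ) := by simp [assoc]
  simp only [two_zsmul, Preadditive.comp_add, Preadditive.comp_sub, key]
  linear_combination (norm := abel) -expand
end

section
/- Let T be a triangulated category and n ≥ 2. If every object Y of T has positive n-order (equivalently n·id_Y = 0 for all objects Y), then every object of T has infinite n-order; i.e., for all k ≥ 0 and all objects Y, Y has n-order ≥ k. -/
open CategoryTheory Category Limits Pretriangulated

variable {C : Type*} [Category C] [Preadditive C] [HasZeroObject C]
  [HasShift C ℤ] [∀ n : ℤ, (shiftFunctor C n).Additive] [Pretriangulated C]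

/-- `nOrderGE n k Y` says that the object `Y` has `n`-order `≥ k`:
every object has `n`-order `≥ 0`; and `Y` has `n`-order `≥ k+1` iff every
morphism `f : K ⟶ Y` admits an extension `f̄ : K/n ⟶ Y` (over the structure map
`π : K ⟶ K/n` of some cone `K/n` of `n • 𝟙 K`) such that some cone of `f̄`
has `n`-order `≥ k`. -/
def nOrderGE (n : ℕ) : ℕ → C → Prop
  | 0, _ => True
  | k + 1, Y => ∀ (K : C) (f : K ⟶ Y),
      ∃ (Kn : C) (π : K ⟶ Kn) (δ : Kn ⟶ K⟦(1 : ℤ)⟧)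
        (_ : Triangle.mk ((n : ℤ) • 𝟙 K) π δ ∈ distTriang C)
        (fbar : Kn ⟶ Y) (Cf : C) (ι : Y ⟶ Cf) (δ' : Cf ⟶ Kn⟦(1 : ℤ)⟧)
        (_ : Triangle.mk fbar ι δ' ∈ distTriang C),
        π ≫ fbar = f ∧ nOrderGE n k Cf

lemma exists_comp_eq_of_zsmul_eq_zero {m : ℤ} {K Kn Y : C} {π : K ⟶ Kn}
    {δ : Kn ⟶ K⟦(1 : ℤ)⟧} (hT : Triangle.mk (m • 𝟙 K) π δ ∈ distTriang C)
    (f : K ⟶ Y) (hf : m • f = 0) : ∃ fbar : Kn ⟶ Y, π ≫ fbar = f := by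
  obtain ⟨fbar, hfbar⟩ := Triangle.yoneda_exact₂ _ hT f (by
    change (m • 𝟙 K) ≫ f = 0
    simp only [Linear.smul_comp, id_comp, hf])
  exact ⟨fbar, hfbar.symm⟩

lemma nOrderGE_succ_of_forall {n k : ℕ} (h : ∀ Y : C, (n : ℤ) • 𝟙 Y = 0)
    (ih : ∀ Y : C, nOrderGE n k Y) (Y : C) : nOrderGE n (k + 1) Y := by
  intro K f
  obtain ⟨Kn, π, δ, hT⟩ := distinguished_cocone_triangle ((n : ℤ) • 𝟙 K)
  obtain ⟨fbar, hfbar⟩ := exists_comp_eq_of_zsmul_eq_zero hT f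
    (by rw [← comp_id f, ← Preadditive.comp_zsmul, h, comp_zero])
  obtain ⟨Cf, ι, δ', hT'⟩ := distinguished_cocone_triangle fbar
  exact ⟨Kn, π, δ, hT, fbar, Cf, ι, δ', hT', hfbar, ih Cf⟩

theorem stmt11_general (n : ℕ)
    (h : ∀ Y : C, (n : ℤ) • 𝟙 Y = 0) :
    ∀ (k : ℕ) (Y : C), nOrderGE n k Y := by
  intro k
  induction k with
  | zero => exact fun _ => trivial
  | succ k ih => exact nOrderGE_succ_of_forall h ih

/-- If every object of a triangulated category `C` has positive `n`-order
(equivalently, `n • 𝟙 Y = 0` for all objects `Y`, i.e. `C` is `ℤ/n`-linear),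
then every object of `C` has infinite `n`-order. -/
theorem stmt11 (n : ℕ) (hn : 2 ≤ n)
    (h : ∀ Y : C, (n : ℤ) • 𝟙 Y = 0) :
    ∀ (k : ℕ) (Y : C), nOrderGE n k Y :=
  stmt11_general n h
end

section
/- Let T be a triangulated category and n ≥ 2 an integer. Suppose there exist a triangulated category T' and exact functors ρ_*: T → T', ρ^*: T' → T forming an adjoint pair (ρ_*, ρ^*) such that for every object X of T there is a distinguished triangle X --n·--> X --η--> ρ^*(ρ_* X) --> X[1], with η the unit of the adjunction. Then for every object Z of T' and every k ≥ 0, the object ρ^*Z has n-order ≥ k; in particular X/n ≅ ρ^*(ρ_* X) has infinite n-order for every X, and T has infinite n-order. -/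
open CategoryTheory Category Limits Pretriangulated

variable {C : Type*} [Category C] [Preadditive C] [HasZeroObject C]
  [HasShift C ℤ] [∀ n : ℤ, (shiftFunctor C n).Additive] [Pretriangulated C]

lemma nOrderGE_of_iso {n k : ℕ} {Y Y' : C} (e : Y ≅ Y') (h : nOrderGE n k Y) :
    nOrderGE n k Y' := by
  induction k generalizing Y Y' with
  | zero => trivial
  | succ k ih =>
    intro K f
    obtain ⟨Kn, π, δ, hT, fbar, Cf, ι, δ', hT', hcomm, hCf⟩ := h K (f ≫ e.inv)
    refine ⟨Kn, π, δ, hT, fbar ≫ e.hom, Cf, e.inv ≫ ι, δ', ?_, ?_, hCf⟩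
    · refine isomorphic_distinguished _ hT' _ ?_
      exact Triangle.isoMk _ _ (Iso.refl _) e.symm (Iso.refl _)
        (by exact (by simp : (fbar ≫ e.hom) ≫ e.inv = 𝟙 Kn ≫ fbar))
        (by exact (by simp : (e.inv ≫ ι) ≫ 𝟙 Cf = e.inv ≫ ι))
        (by exact (by simp : δ' ≫ (shiftFunctor C (1:ℤ)).map (𝟙 Kn) = 𝟙 Cf ≫ δ'))
    · rw [← assoc, hcomm, assoc, e.inv_hom_id, comp_id]

/-- Let `C` be a triangulated category and `n ≥ 2`.  Suppose there are a
triangulated category `C'` and an adjoint pair of exact functors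
`ρ_* = F : C ⥤ C'` and `ρ^* = G : C' ⥤ C` such that for every object `X` of `C`
the unit `η_X : X ⟶ G(F X)` fits into a distinguished triangle
`X --n•--> X --η--> G(F X) --> X⟦1⟧`.  Then for every object `Z` of `C'` and
every `k`, the object `G Z` has `n`-order `≥ k`; in particular every cone
`X/n ≅ G(F X)` of `n • 𝟙 X` has infinite `n`-order, and `C` has infinite
`n`-order (every zero object has `n`-order `≥ k` for all `k`). -/
theorem stmt14 {C' : Type*} [Category C'] [Preadditive C'] [HasZeroObject C']
    [HasShift C' ℤ] [∀ n : ℤ, (shiftFunctor C' n).Additive] [Pretriangulated C']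
    (n : ℕ) (hn : 2 ≤ n)
    (F : C ⥤ C') (G : C' ⥤ C)
    [F.CommShift ℤ] [F.IsTriangulated] [G.CommShift ℤ] [G.IsTriangulated]
    (adj : F ⊣ G)
    (htri : ∀ X : C, ∃ δ : G.obj (F.obj X) ⟶ X⟦(1 : ℤ)⟧,
      Triangle.mk ((n : ℤ) • 𝟙 X) (adj.unit.app X) δ ∈ distTriang C) :
    (∀ (Z : C') (k : ℕ), nOrderGE n k (G.obj Z)) ∧
    (∀ (X Kn : C) (π : X ⟶ Kn) (δ : Kn ⟶ X⟦(1 : ℤ)⟧),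
      Triangle.mk ((n : ℤ) • 𝟙 X) π δ ∈ (distTriang C) →
      ∀ k : ℕ, nOrderGE n k Kn) ∧
    (∀ Z : C, Limits.IsZero Z → ∀ k : ℕ, nOrderGE n k Z) := by
  have main : ∀ (k : ℕ) (Z : C'), nOrderGE n k (G.obj Z) := by
    intro k
    induction k with
    | zero => intro Z; trivial
    | succ k ih =>
      intro Z K f
      obtain ⟨δ, hT⟩ := htri K
      obtain ⟨Cf', ι', δ'', hT'⟩ :=
        distinguished_cocone_triangle ((adj.homEquiv K Z).symm f)
      refine ⟨G.obj (F.obj K), adj.unit.app K, δ, hT,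
        G.map ((adj.homEquiv K Z).symm f), G.obj Cf', G.map ι',
        G.map δ'' ≫ (G.commShiftIso (1 : ℤ)).hom.app (F.obj K), ?_, ?_, ih Cf'⟩
      · exact G.map_distinguished _ hT'
      · rw [← Adjunction.homEquiv_unit]
        simp
  refine ⟨fun Z k => main k Z, ?_, ?_⟩
  · intro X Kn π δ hT k
    obtain ⟨δ₀, hT₀⟩ := htri X
    have e := isoTriangleOfIso₁₂ _ _ hT₀ hT (Iso.refl _) (Iso.refl _)
      (by exact (by simp : ((n : ℤ) • 𝟙 X) ≫ 𝟙 X = 𝟙 X ≫ ((n : ℤ) • 𝟙 X)))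
    exact nOrderGE_of_iso (Triangle.π₃.mapIso e) (main k (F.obj X))
  · intro Z hZ k
    match k with
    | 0 => trivial
    | k + 1 =>
      intro K f
      obtain ⟨δ, hT⟩ := htri K
      let Kn := G.obj (F.obj K)
      have hzero : Triangle.mk (0 : Kn ⟶ Z) (0 : Z ⟶ Kn⟦(1:ℤ)⟧)
          (-(𝟙 (Kn⟦(1:ℤ)⟧))) ∈ distTriang C := by
        refine isomorphic_distinguished _
          (rot_of_distTriang _ (contractible_distinguished Kn)) _ ?_
        refine Triangle.isoMk _ _ (Iso.refl _) hZ.isoZero (Iso.refl _) ?_ ?_ ?_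
        · apply (isZero_zero C).eq_of_tgt
        · apply hZ.eq_of_src
        · exact (by simp : (-𝟙 (Kn⟦(1:ℤ)⟧)) ≫ (shiftFunctor C (1:ℤ)).map (𝟙 Kn) =
            𝟙 (Kn⟦(1:ℤ)⟧) ≫ (-(shiftFunctor C (1:ℤ)).map (𝟙 Kn)))
      refine ⟨Kn, adj.unit.app K, δ, hT, 0, Kn⟦(1:ℤ)⟧, 0, -(𝟙 _), hzero,
        by rw [comp_zero]; exact (hZ.eq_of_tgt _ _), ?_⟩
      exact nOrderGE_of_iso ((G.commShiftIso (1:ℤ)).app (F.obj K))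
        (main k ((F.obj K)⟦(1:ℤ)⟧))
end

section
/- Let T be a triangulated category in which there exists an object X with n·id_{X/n} ≠ 0 for some cone X/n of n·id_X and some n ≥ 2. Then T admits no biexact pairing ⊗: D^b(ℤ) × T → T which is unital with respect to the derived tensor product; in particular T is not algebraic. -/
/-!
Tensoring the triangle `ℤ --n--> ℤ --> ℤ/n` with `X` yields a distinguished triangle
`X --n--> X --> ℤ/n ⊗ X`, so `ℤ/n ⊗ X` is a cone of `n • 𝟙 X` and hence isomorphic to `X/n`.
Since `n` kills `ℤ/n`, additivity makes it kill `ℤ/n ⊗ X`, and therefore `X/n` as well.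
-/

open CategoryTheory Category Limits Pretriangulated

namespace CategoryTheory

variable {C : Type*} [Category C] [Preadditive C]

lemma Functor.map_zsmul_id {D : Type*} [Category D] [Preadditive D] (F : C ⥤ D) [F.Additive]
    (n : ℤ) (X : C) : F.map (n • 𝟙 X) = n • 𝟙 (F.obj X) := by
  rw [F.map_zsmul, F.map_id]

lemma zsmul_id_comp_eq_comp_zsmul_id {X Y : C} (n : ℤ) (f : X ⟶ Y) :
    (n • 𝟙 X) ≫ f = f ≫ (n • 𝟙 Y) := by
  simp

lemma Iso.zsmul_id_eq_zero {X Y : C} (e : X ≅ Y) {n : ℤ} (h : n • 𝟙 X = 0) : n • 𝟙 Y = 0 := by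
  calc n • 𝟙 Y = e.inv ≫ (n • 𝟙 X) ≫ e.hom := by simp
    _ = 0 := by rw [h, zero_comp, comp_zero]

variable [HasZeroObject C] [HasShift C ℤ] [∀ n : ℤ, (shiftFunctor C n).Additive]
  [Pretriangulated C]

noncomputable def Pretriangulated.zsmulIdConeIsoOfIso {n : ℤ} {X X' Xn Xn' : C}
    {π : X ⟶ Xn} {δ : Xn ⟶ X⟦(1 : ℤ)⟧} {π' : X' ⟶ Xn'} {δ' : Xn' ⟶ X'⟦(1 : ℤ)⟧}
    (hT : Triangle.mk (n • 𝟙 X) π δ ∈ distTriang C)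
    (hT' : Triangle.mk (n • 𝟙 X') π' δ' ∈ distTriang C) (e : X ≅ X') : Xn ≅ Xn' :=
  Triangle.π₃.mapIso <| isoTriangleOfIso₁₂ _ _ hT hT' e e
    (zsmul_id_comp_eq_comp_zsmul_id n e.hom)

end CategoryTheory

/-- Here `D^b(ℤ)` is abstracted as any triangulated category `D` with objects `Z`, `Zn`,
a distinguished triangle `Z --n•--> Z --> Zn --> Z⟦1⟧` and `n • 𝟙 Zn = 0`, as
hold for `ℤ` and `ℤ/n` in `D^b(ℤ)`. -/
theorem stmt19 {C : Type*} [Category C] [Preadditive C] [HasZeroObject C]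
    [HasShift C ℤ] [∀ n : ℤ, (shiftFunctor C n).Additive] [Pretriangulated C]
    (n : ℕ) (hn : 2 ≤ n) (X Xn : C) (π : X ⟶ Xn) (δ : Xn ⟶ X⟦(1 : ℤ)⟧)
    (hT : Triangle.mk ((n : ℤ) • 𝟙 X) π δ ∈ distTriang C)
    (hXn : (n : ℤ) • 𝟙 Xn ≠ 0) :
    ∀ (D : Type*) (_ : Category D) (_ : Preadditive D) (_ : HasZeroObject D)
      (_ : HasShift D ℤ) (_ : ∀ n : ℤ, (shiftFunctor D n).Additive)
      (_ : Pretriangulated D)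
      (P : D ⥤ C ⥤ C) (_ : P.Additive) (_ : ∀ d : D, (P.obj d).Additive)
      (_ : ∀ (Y : C) (T : Triangle D), T ∈ (distTriang D) →
        ∃ δ' : (P.obj T.obj₃).obj Y ⟶ ((P.obj T.obj₁).obj Y)⟦(1 : ℤ)⟧,
          Triangle.mk ((P.map T.mor₁).app Y) ((P.map T.mor₂).app Y) δ' ∈ distTriang C)
      (_ : ∀ (d : D) (T : Triangle C), T ∈ (distTriang C) →
        ∃ δ' : (P.obj d).obj T.obj₃ ⟶ ((P.obj d).obj T.obj₁)⟦(1 : ℤ)⟧,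
          Triangle.mk ((P.obj d).map T.mor₁) ((P.obj d).map T.mor₂) δ' ∈ distTriang C)
      (Z Zn : D) (_ : P.obj Z ≅ 𝟭 C)
      (g : Z ⟶ Zn) (h : Zn ⟶ Z⟦(1 : ℤ)⟧)
      (_ : Triangle.mk ((n : ℤ) • 𝟙 Z) g h ∈ distTriang D)
      (_ : (n : ℤ) • 𝟙 Zn = 0),
      False := by
  intro D _ _ _ _ _ _ P _ _ hExact _ Z Zn unit g h hTZ hZn
  let tensorX : D ⥤ C := P ⋙ (evaluation C C).obj X
  obtain ⟨δ', hTX⟩ := hExact X _ hTZ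
  have hTX' : Triangle.mk ((n : ℤ) • 𝟙 (tensorX.obj Z)) (tensorX.map g) δ' ∈ distTriang C := by
    rwa [← tensorX.map_zsmul_id]
  have hTensorZn : (n : ℤ) • 𝟙 (tensorX.obj Zn) = 0 := by
    rw [← tensorX.map_zsmul_id, hZn, tensorX.map_zero]
  exact hXn ((zsmulIdConeIsoOfIso hTX' hT (unit.app X)).zsmul_id_eq_zero hTensorZn)
end
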